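/- arXiv:2205.05878 — 6 statements merged into one kernel-verified Lean document; each statement's English description precedes it below -/
import Mathlib

section
/- Uniformity of the adaptive conformity scores under the true model (Proposition 1, first part): if Y is a random label with P[Y = y] = \pi_y for every y \in \{1,\dots,K\} and U is uniformly distributed on [0,1] and independent of Y, then the conformity score W(Y,U) is uniformly distributed on [0,1]; that is, P[W(Y,U) \le \beta] = \beta for every \beta \in [0,1]. -/
open MeasureTheory ProbabilityTheory

/-- Proposition 1 (first part): if `Y` is a random label with `P[Y = y] = π y` and `U` is
uniform on `[0,1]` independent of `Y`, then the adaptive conformity score `W (Y, U)` is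
uniformly distributed on `[0,1]`. -/
theorem conformity_score_uniform
    -- the probability vector π on {1,...,K}
    (K : ℕ) (hK : 1 ≤ K)
    (π : Fin K → ℝ) (hπ0 : ∀ y, 0 ≤ π y) (hπ1 : ∑ y, π y = 1)
    -- a permutation sorting π in nonincreasing order
    (σ : Equiv.Perm (Fin K))
    (hσ : ∀ i j : Fin K, i ≤ j → π (σ j) ≤ π (σ i))
    -- the cumulative sums C_k = π_{σ(1)} + ... + π_{σ(k)} (C_0 = 0)
    (C : ℕ → ℝ)
    (hC : ∀ k : ℕ, C k = ∑ j ∈ Finset.univ.filter (fun j : Fin K => (j : ℕ) < k), π (σ j))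
    -- the conformity score W(y, u) = C_{r(y)} - u * π_{σ(r(y))}, where r(y) = σ⁻¹(y)
    (W : Fin K → ℝ → ℝ)
    (hW : ∀ y u, W y u = C ((σ.symm y : ℕ) + 1) - u * π y)
    -- the random label Y with P[Y = y] = π y and the independent uniform noise U
    (Ω : Type*) [MeasurableSpace Ω] (P : Measure Ω) [IsProbabilityMeasure P]
    (Y : Ω → Fin K) (U : Ω → ℝ) (hY : Measurable Y) (hU : Measurable U)
    (hYdist : ∀ y, P {ω | Y ω = y} = ENNReal.ofReal (π y))
    (hUdist : P.map U = volume.restrict (Set.Icc (0 : ℝ) 1))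
    (hindep : IndepFun Y U P) :
    -- conclusion: P[W(Y,U) ≤ β] = β for every β ∈ [0,1]
    ∀ β ∈ Set.Icc (0 : ℝ) 1,
      P {ω | W (Y ω) (U ω) ≤ β} = ENNReal.ofReal β := by
  intro β hβ
  obtain ⟨hβ0, hβ1⟩ := hβ
  -- basic facts about C
  have hC0 : C 0 = 0 := by rw [hC]; simp
  have hCK : C K = 1 := by
    rw [hC]
    have h1 : Finset.univ.filter (fun j : Fin K => (j : ℕ) < K) = Finset.univ := by
      ext j; simp [j.isLt]
    rw [h1, ← hπ1]
    exact Equiv.sum_comp σ π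
  have hCstep : ∀ r : Fin K, C ((r : ℕ) + 1) = C (r : ℕ) + π (σ r) := by
    intro r
    rw [hC, hC]
    have h1 : Finset.univ.filter (fun j : Fin K => (j : ℕ) < (r : ℕ) + 1)
        = insert r (Finset.univ.filter (fun j : Fin K => (j : ℕ) < (r : ℕ))) := by
      ext j
      simp only [Finset.mem_filter, Finset.mem_univ, true_and, Finset.mem_insert, Fin.ext_iff]
      omega
    rw [h1, Finset.sum_insert (by simp)]
    ring
  have hCmono : Monotone C := by
    intro a b hab
    rw [hC, hC]
    apply Finset.sum_le_sum_of_subset_of_nonneg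
    · intro j hj
      simp only [Finset.mem_filter, Finset.mem_univ, true_and] at *
      omega
    · intros; exact hπ0 _
  -- measurability of the level sets of W y
  have hT : ∀ y : Fin K, MeasurableSet {u : ℝ | W y u ≤ β} := by
    intro y
    have h1 : {u : ℝ | W y u ≤ β}
        = (fun u : ℝ => C ((σ.symm y : ℕ) + 1) - u * π y) ⁻¹' Set.Iic β := by
      ext u; simp [hW]
    rw [h1]
    exact (measurable_const.sub (measurable_id.mul_const _)) measurableSet_Iic
  -- the telescoping function
  set g : ℕ → ℝ := fun k => min (C k) β with hg
  have hgmono : Monotone g := fun a b hab => min_le_min (hCmono hab) le_rfl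
  -- the per-label term
  have hterm : ∀ y : Fin K,
      P ({ω | Y ω = y} ∩ U ⁻¹' {u | W y u ≤ β})
        = ENNReal.ofReal (g ((σ.symm y : ℕ) + 1) - g (σ.symm y : ℕ)) := by
    intro y
    set r : Fin K := σ.symm y with hr
    have hry : σ r = y := σ.apply_symm_apply y
    have hstep : C ((r : ℕ) + 1) = C (r : ℕ) + π y := by rw [hCstep r, hry]
    have hYset : {ω | Y ω = y} = Y ⁻¹' {y} := rfl
    rw [hYset, hindep.measure_inter_preimage_eq_mul {y} _ (measurableSet_singleton y) (hT y)]
    have hYd : P (Y ⁻¹' {y}) = ENNReal.ofReal (π y) := hYdist y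
    have hUd : P (U ⁻¹' {u | W y u ≤ β})
        = volume.restrict (Set.Icc (0 : ℝ) 1) {u | W y u ≤ β} := by
      rw [← Measure.map_apply hU (hT y), hUdist]
    rw [hYd, hUd]
    rcases eq_or_lt_of_le (hπ0 y) with h0 | hp
    · -- π y = 0
      rw [← h0, ENNReal.ofReal_zero, zero_mul]
      have : g ((r : ℕ) + 1) = g (r : ℕ) := by
        simp only [hg]; rw [hstep, ← h0, add_zero]
      rw [this, sub_self, ENNReal.ofReal_zero]
    · -- π y > 0
      set a : ℝ := (C ((r : ℕ) + 1) - β) / π y with ha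
      have hTset : {u : ℝ | W y u ≤ β} = Set.Ici a := by
        ext u
        simp only [Set.mem_setOf_eq, Set.mem_Ici, hW, ha]
        rw [div_le_iff₀ hp]
        constructor <;> intro <;> linarith
      have hIcc : Set.Ici a ∩ Set.Icc (0 : ℝ) 1 = Set.Icc (max a 0) 1 := by
        ext u
        simp only [Set.mem_inter_iff, Set.mem_Ici, Set.mem_Icc, max_le_iff]
        tauto
      rw [hTset, Measure.restrict_apply measurableSet_Ici, hIcc, Real.volume_Icc]
      simp only [hg]
      rcases le_total β (C (r : ℕ)) with hcb | hcb
      · -- β ≤ C r : both sides are zero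
        have h1 : 1 ≤ a := by
          rw [ha, le_div_iff₀ hp]; linarith [hstep]
        have h2 : (1 : ℝ) - max a 0 ≤ 0 := by
          have := le_max_left a 0; linarith
        rw [ENNReal.ofReal_eq_zero.mpr h2, mul_zero]
        have h3 : min (C ((r : ℕ) + 1)) β = β :=
          min_eq_right (by linarith [hstep])
        have h4 : min (C (r : ℕ)) β = β := min_eq_right hcb
        rw [h3, h4, sub_self, ENNReal.ofReal_zero]
      · -- C r ≤ β
        rw [← ENNReal.ofReal_mul (hπ0 y)]
        congr 1
        have hmin : min (C (r : ℕ)) β = C (r : ℕ) := min_eq_left hcb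
        rcases le_total (C ((r : ℕ) + 1)) β with h2 | h2
        · have ha0 : a ≤ 0 := div_nonpos_of_nonpos_of_nonneg (by linarith) (le_of_lt hp)
          rw [max_eq_right ha0, hmin, min_eq_left h2]
          linarith [hstep]
        · have ha0 : 0 ≤ a := div_nonneg (by linarith) (le_of_lt hp)
          rw [max_eq_left ha0, hmin, min_eq_right h2, ha]
          field_simp
          linarith [hstep]
  -- decompose the event over the value of Y
  have hset : {ω | W (Y ω) (U ω) ≤ β}
      = ⋃ y : Fin K, ({ω | Y ω = y} ∩ U ⁻¹' {u | W y u ≤ β}) := by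
    ext ω
    simp only [Set.mem_setOf_eq, Set.mem_iUnion, Set.mem_inter_iff, Set.mem_preimage]
    constructor
    · intro h; exact ⟨Y ω, rfl, h⟩
    · rintro ⟨y, h1, h2⟩; rw [h1]; exact h2
  have hmeas : ∀ y : Fin K,
      MeasurableSet ({ω | Y ω = y} ∩ U ⁻¹' {u | W y u ≤ β}) := by
    intro y
    exact (hY (measurableSet_singleton y)).inter (hU (hT y))
  have hdisj : Pairwise (Function.onFun Disjoint
      (fun y : Fin K => {ω | Y ω = y} ∩ U ⁻¹' {u | W y u ≤ β})) := by
    intro i j hij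
    apply Set.disjoint_left.mpr
    rintro ω ⟨h1, _⟩ ⟨h2, _⟩
    exact hij (h1 ▸ h2 ▸ rfl)
  rw [hset, measure_iUnion hdisj hmeas, tsum_fintype]
  simp only [hterm]
  have hre : ∑ y : Fin K, ENNReal.ofReal (g ((σ.symm y : ℕ) + 1) - g (σ.symm y : ℕ))
      = ∑ r : Fin K, ENNReal.ofReal (g ((r : ℕ) + 1) - g (r : ℕ)) :=
    Equiv.sum_comp σ.symm (fun r : Fin K => ENNReal.ofReal (g ((r : ℕ) + 1) - g (r : ℕ)))
  rw [hre, ← ENNReal.ofReal_sum_of_nonneg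
    (fun r _ => sub_nonneg.mpr (hgmono (Nat.le_succ _)))]
  have htel : ∑ r : Fin K, (g ((r : ℕ) + 1) - g (r : ℕ)) = g K - g 0 := by
    rw [Fin.sum_univ_eq_sum_range (fun k => g (k + 1) - g k) K]
    exact Finset.sum_range_sub g K
  rw [htel]
  have hgK : g K = β := by simp only [hg]; rw [hCK]; exact min_eq_right hβ1
  have hg0 : g 0 = 0 := by simp only [hg]; rw [hC0]; exact min_eq_left hβ0
  rw [hgK, hg0, sub_zero]
end

section
/- Exact coverage of the randomized oracle prediction sets: if Y is a random label with P[Y = y] = \pi_y and U is uniformly distributed on [0,1] and independent of Y, then for every \tau \in (0,1], P[Y \in S(U,\tau)] = \tau. In particular, the randomized oracle set S(U, 1-\alpha) has exact coverage 1-\alpha for every \alpha \in [0,1). -/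
open MeasureTheory ProbabilityTheory

/-- Exact coverage of the randomized oracle prediction sets: if `Y` is a random label with
`P[Y = y] = π y` and `U` is uniform on `[0,1]` independent of `Y`, then for every
`τ ∈ (0,1]`, `P[Y ∈ S(U, τ)] = τ`; in particular `S(U, 1-α)` has exact coverage `1-α`
for every `α ∈ [0,1)`. -/
theorem oracle_sets_exact_coverage
    -- the probability vector π on {1,...,K}
    (K : ℕ) (hK : 1 ≤ K)
    (π : Fin K → ℝ) (hπ0 : ∀ y, 0 ≤ π y) (hπ1 : ∑ y, π y = 1)
    -- a permutation sorting π in nonincreasing order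
    (σ : Equiv.Perm (Fin K))
    (hσ : ∀ i j : Fin K, i ≤ j → π (σ j) ≤ π (σ i))
    -- the cumulative sums C_k = π_{σ(1)} + ... + π_{σ(k)} (C_0 = 0)
    (C : ℕ → ℝ)
    (hC : ∀ k : ℕ, C k = ∑ j ∈ Finset.univ.filter (fun j : Fin K => (j : ℕ) < k), π (σ j))
    -- πord k = π_{σ(k)} for 1 ≤ k ≤ K (1-indexed sorted probabilities)
    (πord : ℕ → ℝ) (hπord : ∀ k : Fin K, πord ((k : ℕ) + 1) = π (σ k))
    -- L(τ) = min {k ≥ 1 : C_k ≥ τ}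
    (L : ℝ → ℕ) (hL : ∀ τ ∈ Set.Ioc (0 : ℝ) 1, L τ = sInf {k : ℕ | 1 ≤ k ∧ τ ≤ C k})
    -- V(τ) = (C_{L(τ)} - τ) / π_{σ(L(τ))}
    (V : ℝ → ℝ) (hV : ∀ τ ∈ Set.Ioc (0 : ℝ) 1, V τ = (C (L τ) - τ) / πord (L τ))
    -- S(u, τ) = {σ(1),...,σ(L(τ)-1)} if u ≤ V(τ), and {σ(1),...,σ(L(τ))} otherwise
    (S : ℝ → ℝ → Set (Fin K))
    (hS : ∀ u τ, S u τ =
      {y | (σ.symm y : ℕ) + 1 ≤ (if u ≤ V τ then L τ - 1 else L τ)})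
    -- the random label Y with P[Y = y] = π y and the independent uniform noise U
    (Ω : Type*) [MeasurableSpace Ω] (P : Measure Ω) [IsProbabilityMeasure P]
    (Y : Ω → Fin K) (U : Ω → ℝ) (hY : Measurable Y) (hU : Measurable U)
    (hYdist : ∀ y, P {ω | Y ω = y} = ENNReal.ofReal (π y))
    (hUdist : P.map U = volume.restrict (Set.Icc (0 : ℝ) 1))
    (hindep : IndepFun Y U P) :
    -- conclusion: P[Y ∈ S(U,τ)] = τ for all τ ∈ (0,1]; in particular exact 1-α coverage
    (∀ τ ∈ Set.Ioc (0 : ℝ) 1, P {ω | Y ω ∈ S (U ω) τ} = ENNReal.ofReal τ) ∧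
    (∀ α ∈ Set.Ico (0 : ℝ) 1,
      P {ω | Y ω ∈ S (U ω) (1 - α)} = ENNReal.ofReal (1 - α)) := by
  have key : ∀ τ ∈ Set.Ioc (0 : ℝ) 1, P {ω | Y ω ∈ S (U ω) τ} = ENNReal.ofReal τ := by
    rintro τ ⟨hτ0, hτ1⟩
    -- basic facts about C
    have hC0 : C 0 = 0 := by rw [hC]; simp
    have hCK : C K = 1 := by
      have huniv : Finset.univ.filter (fun j : Fin K => (j : ℕ) < K) = Finset.univ := by
        ext j; simp [j.isLt]
      rw [hC, huniv, Equiv.sum_comp σ π, hπ1]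
    have hCmono : Monotone C := by
      intro a b hab
      rw [hC, hC]
      apply Finset.sum_le_sum_of_subset_of_nonneg
      · intro j hj; simp only [Finset.mem_filter, Finset.mem_univ, true_and] at *; omega
      · intros; exact hπ0 _
    have hCstep : ∀ j : Fin K, C ((j : ℕ) + 1) = C (j : ℕ) + π (σ j) := by
      intro j
      rw [hC, hC]
      have hins : Finset.univ.filter (fun i : Fin K => (i : ℕ) < (j : ℕ) + 1)
          = insert j (Finset.univ.filter (fun i : Fin K => (i : ℕ) < (j : ℕ))) := by
        ext i
        simp only [Finset.mem_filter, Finset.mem_univ, true_and, Finset.mem_insert, Fin.ext_iff]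
        omega
      rw [hins, Finset.sum_insert (by simp)]
      ring
    have hCnn : ∀ k, 0 ≤ C k := by
      intro k; rw [hC]; exact Finset.sum_nonneg fun j _ => hπ0 _
    -- facts about L
    set L₀ := L τ with hL0def
    have hLdef : L₀ = sInf {k : ℕ | 1 ≤ k ∧ τ ≤ C k} := hL τ ⟨hτ0, hτ1⟩
    have hKmem : K ∈ {k : ℕ | 1 ≤ k ∧ τ ≤ C k} := ⟨hK, by rw [hCK]; exact hτ1⟩
    have hLmem : L₀ ∈ {k : ℕ | 1 ≤ k ∧ τ ≤ C k} := by
      rw [hLdef]; exact Nat.sInf_mem ⟨K, hKmem⟩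
    obtain ⟨hL1, hLC⟩ := hLmem
    have hLK : L₀ ≤ K := by rw [hLdef]; exact Nat.sInf_le hKmem
    have hCpred : C (L₀ - 1) < τ := by
      by_contra h
      push_neg at h
      rcases Nat.lt_or_ge 1 L₀ with h1 | h1
      · have hmem2 : L₀ - 1 ∈ {k : ℕ | 1 ≤ k ∧ τ ≤ C k} := ⟨by omega, h⟩
        have := Nat.sInf_le hmem2
        rw [← hLdef] at this
        omega
      · have : L₀ = 1 := le_antisymm h1 hL1
        rw [this] at h; simp [hC0] at h; linarith
    -- the label of rank L₀
    have hL1K : L₀ - 1 < K := by omega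
    set j0 : Fin K := ⟨L₀ - 1, hL1K⟩ with hj0def
    have hj0 : (j0 : ℕ) + 1 = L₀ := by simp [hj0def]; omega
    have hπj0 : πord L₀ = π (σ j0) := by rw [← hj0, hπord]
    have hCL : C L₀ = C (L₀ - 1) + π (σ j0) := by
      have := hCstep j0
      simp only [hj0def] at this
      rw [← hj0]; simpa using this
    have hπpos : 0 < π (σ j0) := by linarith
    -- facts about V
    have hVdef : V τ = (C L₀ - τ) / π (σ j0) := by
      rw [hV τ ⟨hτ0, hτ1⟩, hπj0]
    have hVnn : 0 ≤ V τ := by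
      rw [hVdef]; exact div_nonneg (by linarith) hπpos.le
    have hVlt1 : V τ < 1 := by
      rw [hVdef, div_lt_one hπpos]; linarith
    have hVmul : π (σ j0) * V τ = C L₀ - τ := by
      rw [hVdef]; field_simp
    -- decomposition of the event
    have hset : {ω | Y ω ∈ S (U ω) τ}
        = (Y ⁻¹' {y | (σ.symm y : ℕ) + 1 ≤ L₀ - 1})
          ∪ ((Y ⁻¹' {σ j0}) ∩ (U ⁻¹' Set.Ioi (V τ))) := by
      ext ω
      simp only [hS, Set.mem_setOf_eq, Set.mem_union, Set.mem_inter_iff, Set.mem_preimage,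
        Set.mem_singleton_iff, Set.mem_Ioi]
      constructor
      · intro h
        split_ifs at h with hu
        · left; exact h
        · by_cases h' : (σ.symm (Y ω) : ℕ) + 1 ≤ L₀ - 1
          · left; exact h'
          · right
            have hrank : σ.symm (Y ω) = j0 := by
              apply Fin.ext; simp [hj0def]; omega
            refine ⟨?_, lt_of_not_ge hu⟩
            have := congrArg σ hrank
            simpa using this
      · rintro (h | ⟨h1, h2⟩)
        · split_ifs with hu
          · exact h
          · omega
        · have hrank : σ.symm (Y ω) = j0 := by rw [h1]; exact σ.symm_apply_apply j0
          split_ifs with hu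
          · exact absurd hu (not_le.2 h2)
          · rw [hrank]; simp [hj0def]; omega
    -- measurability
    have hmY : ∀ T : Set (Fin K), MeasurableSet (Y ⁻¹' T) := by
      intro T; exact hY ((Set.to_countable T).measurableSet)
    have hmB : MeasurableSet ((Y ⁻¹' {σ j0}) ∩ (U ⁻¹' Set.Ioi (V τ))) :=
      (hmY _).inter (hU measurableSet_Ioi)
    -- disjointness
    have hdisj : Disjoint (Y ⁻¹' {y | (σ.symm y : ℕ) + 1 ≤ L₀ - 1})
        ((Y ⁻¹' {σ j0}) ∩ (U ⁻¹' Set.Ioi (V τ))) := by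
      rw [Set.disjoint_left]
      rintro ω hA ⟨hB1, _⟩
      simp only [Set.mem_preimage, Set.mem_setOf_eq] at hA
      simp only [Set.mem_preimage, Set.mem_singleton_iff] at hB1
      rw [hB1] at hA
      rw [σ.symm_apply_apply] at hA
      have hv : (j0 : ℕ) = L₀ - 1 := rfl
      omega
    -- measure of the first piece
    have hPA : P (Y ⁻¹' {y | (σ.symm y : ℕ) + 1 ≤ L₀ - 1}) = ENNReal.ofReal (C (L₀ - 1)) := by
      set F : Finset (Fin K) := Finset.univ.filter (fun y => (σ.symm y : ℕ) + 1 ≤ L₀ - 1) with hF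
      have hTF : {y : Fin K | (σ.symm y : ℕ) + 1 ≤ L₀ - 1} = ↑F := by
        ext y; simp [hF]
      have hunion : Y ⁻¹' (↑F : Set (Fin K)) = ⋃ y ∈ F, {ω | Y ω = y} := by
        ext ω; simp
      rw [hTF, hunion, measure_biUnion_finset ?_ ?_]
      · have : ∀ y ∈ F, P {ω | Y ω = y} = ENNReal.ofReal (π y) := fun y _ => hYdist y
        rw [Finset.sum_congr rfl this, ← ENNReal.ofReal_sum_of_nonneg (fun y _ => hπ0 y)]
        congr 1
        rw [hC]
        refine Finset.sum_nbij' (fun y => σ.symm y) (fun j => σ j) ?_ ?_ ?_ ?_ ?_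
        · intro y hy; simp [hF] at hy ⊢; omega
        · intro j hj; simp [hF] at hj ⊢; omega
        · intro y _; simp
        · intro j _; simp
        · intro y _; simp
      · intro y _ z _ hyz
        simp only [Function.onFun]
        rw [Set.disjoint_left]
        rintro ω h1 h2
        simp only [Set.mem_setOf_eq] at h1 h2
        exact hyz (h1 ▸ h2)
      · intro y _
        exact hY (MeasurableSet.singleton y)
    -- measure of the second piece
    have hPU : P (U ⁻¹' Set.Ioi (V τ)) = ENNReal.ofReal (1 - V τ) := by
      rw [← Measure.map_apply hU measurableSet_Ioi, hUdist,
        Measure.restrict_apply measurableSet_Ioi]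
      have : Set.Ioi (V τ) ∩ Set.Icc (0 : ℝ) 1 = Set.Ioc (V τ) 1 := by
        ext x
        simp only [Set.mem_inter_iff, Set.mem_Ioi, Set.mem_Icc, Set.mem_Ioc]
        constructor
        · rintro ⟨h1, _, h3⟩; exact ⟨h1, h3⟩
        · rintro ⟨h1, h2⟩; exact ⟨h1, le_of_lt (lt_of_le_of_lt hVnn h1), h2⟩
      rw [this, Real.volume_Ioc]
    have hPB : P ((Y ⁻¹' {σ j0}) ∩ (U ⁻¹' Set.Ioi (V τ)))
        = ENNReal.ofReal (π (σ j0) * (1 - V τ)) := by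
      have := hindep.measure_inter_preimage_eq_mul {σ j0} (Set.Ioi (V τ))
        ((Set.to_countable _).measurableSet) measurableSet_Ioi
      rw [this, hPU]
      have hYj0 : Y ⁻¹' {σ j0} = {ω | Y ω = σ j0} := rfl
      rw [hYj0, hYdist, ← ENNReal.ofReal_mul hπpos.le]
    -- putting things together
    rw [hset, measure_union hdisj hmB, hPA, hPB,
      ← ENNReal.ofReal_add (hCnn _) (by nlinarith)]
    congr 1
    nlinarith
  refine ⟨key, fun α hα => key (1 - α) ⟨by linarith [hα.2], by linarith [hα.1]⟩⟩
end

section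
/- Closed-form characterization of the conformity score: for every label y \in \{1,\dots,K\}, every u \in (0,1), and every \tau \in (0,1], one has y \in S(u,\tau) if and only if W(y,u) < \tau. Consequently, whenever W(y,u) < 1, W(y,u) = \inf\{\tau \in (0,1] : y \in S(u,\tau)\}. -/
/-- Closed-form characterization of the conformity score: for every label `y`, every
`u ∈ (0,1)` and every `τ ∈ (0,1]`, one has `y ∈ S(u,τ) ↔ W(y,u) < τ`; consequently,
whenever `W(y,u) < 1`, `W(y,u) = inf {τ ∈ (0,1] : y ∈ S(u,τ)}`. -/
theorem conformity_score_closed_form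
    -- the probability vector π on {1,...,K}
    (K : ℕ) (hK : 1 ≤ K)
    (π : Fin K → ℝ) (hπ0 : ∀ y, 0 ≤ π y) (hπ1 : ∑ y, π y = 1)
    -- a permutation sorting π in nonincreasing order
    (σ : Equiv.Perm (Fin K))
    (hσ : ∀ i j : Fin K, i ≤ j → π (σ j) ≤ π (σ i))
    -- the cumulative sums C_k = π_{σ(1)} + ... + π_{σ(k)} (C_0 = 0)
    (C : ℕ → ℝ)
    (hC : ∀ k : ℕ, C k = ∑ j ∈ Finset.univ.filter (fun j : Fin K => (j : ℕ) < k), π (σ j))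
    -- πord k = π_{σ(k)} for 1 ≤ k ≤ K (1-indexed sorted probabilities)
    (πord : ℕ → ℝ) (hπord : ∀ k : Fin K, πord ((k : ℕ) + 1) = π (σ k))
    -- L(τ) = min {k ≥ 1 : C_k ≥ τ}
    (L : ℝ → ℕ) (hL : ∀ τ ∈ Set.Ioc (0 : ℝ) 1, L τ = sInf {k : ℕ | 1 ≤ k ∧ τ ≤ C k})
    -- V(τ) = (C_{L(τ)} - τ) / π_{σ(L(τ))}
    (V : ℝ → ℝ) (hV : ∀ τ ∈ Set.Ioc (0 : ℝ) 1, V τ = (C (L τ) - τ) / πord (L τ))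
    -- S(u, τ) = {σ(1),...,σ(L(τ)-1)} if u ≤ V(τ), and {σ(1),...,σ(L(τ))} otherwise
    (S : ℝ → ℝ → Set (Fin K))
    (hS : ∀ u τ, S u τ =
      {y | (σ.symm y : ℕ) + 1 ≤ (if u ≤ V τ then L τ - 1 else L τ)})
    -- the conformity score W(y, u) = C_{r(y)} - u * π_{σ(r(y))}, where r(y) = σ⁻¹(y)
    (W : Fin K → ℝ → ℝ)
    (hW : ∀ y u, W y u = C ((σ.symm y : ℕ) + 1) - u * π y) :
    ∀ (y : Fin K), ∀ u ∈ Set.Ioo (0 : ℝ) 1,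
      (∀ τ ∈ Set.Ioc (0 : ℝ) 1, (y ∈ S u τ ↔ W y u < τ)) ∧
      (W y u < 1 → W y u = sInf {τ : ℝ | τ ∈ Set.Ioc (0 : ℝ) 1 ∧ y ∈ S u τ}) := by
  have hC0 : ∀ k, 0 ≤ C k := by
    intro k; rw [hC]; exact Finset.sum_nonneg fun j _ => hπ0 _
  have hCmono : Monotone C := by
    intro k l hkl
    rw [hC, hC]
    apply Finset.sum_le_sum_of_subset_of_nonneg
    · intro j hj
      simp only [Finset.mem_filter] at *
      exact ⟨hj.1, lt_of_lt_of_le hj.2 hkl⟩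
    · intros; exact hπ0 _
  have hCK : C K = 1 := by
    rw [hC, Finset.filter_true_of_mem (fun j _ => j.isLt), ← hπ1]
    exact Equiv.sum_comp σ π
  have hstep : ∀ k : Fin K, C ((k : ℕ) + 1) = C (k : ℕ) + π (σ k) := by
    intro k
    rw [hC, hC]
    have hins : Finset.univ.filter (fun j : Fin K => (j : ℕ) < (k : ℕ) + 1)
        = insert k (Finset.univ.filter (fun j : Fin K => (j : ℕ) < (k : ℕ))) := by
      ext j
      simp only [Finset.mem_filter, Finset.mem_insert, Finset.mem_univ, true_and,
        Nat.lt_succ_iff, le_iff_lt_or_eq, ← Fin.val_inj]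
      tauto
    rw [hins, Finset.sum_insert (by simp)]
    ring
  intro y u hu
  have hπy : π (σ (σ.symm y)) = π y := by rw [Equiv.apply_symm_apply]
  have hWr : W y u = C ((σ.symm y : ℕ)) + (1 - u) * π y := by
    rw [hW, hstep (σ.symm y), hπy]; ring
  have hW0 : 0 ≤ W y u := by
    rw [hWr]
    have := hπ0 y
    have := hC0 ((σ.symm y : ℕ))
    nlinarith [hu.2]
  have main : ∀ τ ∈ Set.Ioc (0 : ℝ) 1, (y ∈ S u τ ↔ W y u < τ) := by
    intro τ hτ
    obtain ⟨hτ0, hτ1⟩ := hτ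
    have hLdef := hL τ ⟨hτ0, hτ1⟩
    have hmem : K ∈ {k : ℕ | 1 ≤ k ∧ τ ≤ C k} := ⟨hK, by rw [hCK]; exact hτ1⟩
    have hL1 : 1 ≤ L τ ∧ τ ≤ C (L τ) := by
      rw [hLdef]; exact Nat.sInf_mem ⟨K, hmem⟩
    have hLK : L τ ≤ K := by rw [hLdef]; exact Nat.sInf_le hmem
    have hCzero : C 0 = 0 := by
      rw [hC]
      simp
    have hCpred : C (L τ - 1) < τ := by
      by_contra h
      push_neg at h
      rcases Nat.lt_or_ge 1 (L τ) with h1 | h1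
      · have : L τ ≤ L τ - 1 := by
          have hmem2 : L τ - 1 ∈ {k : ℕ | 1 ≤ k ∧ τ ≤ C k} := by
            exact ⟨by omega, h⟩
          have h2 := Nat.sInf_le hmem2
          rwa [← hLdef] at h2
        omega
      · have hL1' : L τ = 1 := le_antisymm h1 hL1.1
        rw [hL1'] at h
        simp only [Nat.sub_self] at h
        rw [hCzero] at h
        linarith
    have hLfin : L τ - 1 < K := by omega
    set kL : Fin K := ⟨L τ - 1, hLfin⟩ with hkL
    have hadd : (kL : ℕ) + 1 = L τ := by
      simp only [hkL]
      omega
    have hπordL : πord (L τ) = π (σ kL) := by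
      rw [← hadd]; exact hπord kL
    have hpos : 0 < πord (L τ) := by
      have hs := hstep kL
      rw [hadd] at hs
      have : (kL : ℕ) = L τ - 1 := rfl
      rw [this] at hs
      rw [hπordL]
      linarith [hL1.2, hCpred]
    -- case analysis helpers
    have haveA : (σ.symm y : ℕ) + 1 < L τ → W y u < τ := by
      intro hlt
      have h1 : C ((σ.symm y : ℕ) + 1) ≤ C (L τ - 1) := hCmono (by omega)
      rw [hW]
      nlinarith [hπ0 y, hu.1]
    have haveB : (σ.symm y : ℕ) + 1 = L τ → (W y u < τ ↔ V τ < u) := by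
      intro heq
      have hky : kL = σ.symm y := by
        apply Fin.ext
        simp only [hkL]
        omega
      have hπyord : πord (L τ) = π y := by
        rw [hπordL, hky, hπy]
      rw [hV τ ⟨hτ0, hτ1⟩, hW, heq, div_lt_iff₀ hpos, hπyord]
      constructor <;> intro h <;> nlinarith
    have haveC : L τ < (σ.symm y : ℕ) + 1 → τ ≤ W y u := by
      intro hlt
      have h1 : C (L τ) ≤ C ((σ.symm y : ℕ)) := hCmono (by omega)
      rw [hWr]
      nlinarith [hπ0 y, hu.2, hL1.2]
    rw [hS]
    simp only [Set.mem_setOf_eq]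
    by_cases huV : u ≤ V τ
    · rw [if_pos huV]
      constructor
      · intro hle
        exact haveA (by omega)
      · intro hWlt
        rcases lt_trichotomy ((σ.symm y : ℕ) + 1) (L τ) with h | h | h
        · omega
        · exact absurd huV (not_le.mpr ((haveB h).mp hWlt))
        · linarith [haveC h]
    · rw [if_neg huV]
      push_neg at huV
      constructor
      · intro hle
        rcases lt_or_eq_of_le hle with h | h
        · exact haveA h
        · exact (haveB h).mpr huV
      · intro hWlt
        by_contra h
        push_neg at h
        linarith [haveC h]
  refine ⟨main, fun hW1 => ?_⟩
  have hset : {τ : ℝ | τ ∈ Set.Ioc (0 : ℝ) 1 ∧ y ∈ S u τ} = Set.Ioc (W y u) 1 := by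
    ext τ
    simp only [Set.mem_setOf_eq, Set.mem_Ioc]
    constructor
    · rintro ⟨hτ, hy⟩
      exact ⟨(main τ hτ).mp hy, hτ.2⟩
    · rintro ⟨h1, h2⟩
      have hτ : τ ∈ Set.Ioc (0 : ℝ) 1 := ⟨lt_of_le_of_lt hW0 h1, h2⟩
      exact ⟨hτ, (main τ hτ).mpr h1⟩
  rw [hset, csInf_Ioc hW1]
end

section
/- Monotonicity of the generalized inverse quantile prediction sets: for every u \in [0,1] and all \tau, \tau' \in (0,1] with \tau \le \tau', one has S(u,\tau) \subseteq S(u,\tau'); i.e., for each fixed u the map \tau \mapsto S(u,\tau) is nondecreasing (nested) in \tau. -/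
/-- Monotonicity (nestedness) of the generalized inverse quantile prediction sets:
for every `u ∈ [0,1]` and all `τ ≤ τ'` in `(0,1]`, `S(u,τ) ⊆ S(u,τ')`. -/
theorem prediction_sets_nested
    -- the probability vector π on {1,...,K}
    (K : ℕ) (hK : 1 ≤ K)
    (π : Fin K → ℝ) (hπ0 : ∀ y, 0 ≤ π y) (hπ1 : ∑ y, π y = 1)
    -- a permutation sorting π in nonincreasing order
    (σ : Equiv.Perm (Fin K))
    (hσ : ∀ i j : Fin K, i ≤ j → π (σ j) ≤ π (σ i))
    -- the cumulative sums C_k = π_{σ(1)} + ... + π_{σ(k)} (C_0 = 0)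
    (C : ℕ → ℝ)
    (hC : ∀ k : ℕ, C k = ∑ j ∈ Finset.univ.filter (fun j : Fin K => (j : ℕ) < k), π (σ j))
    -- πord k = π_{σ(k)} for 1 ≤ k ≤ K (1-indexed sorted probabilities)
    (πord : ℕ → ℝ) (hπord : ∀ k : Fin K, πord ((k : ℕ) + 1) = π (σ k))
    -- L(τ) = min {k ≥ 1 : C_k ≥ τ}
    (L : ℝ → ℕ) (hL : ∀ τ ∈ Set.Ioc (0 : ℝ) 1, L τ = sInf {k : ℕ | 1 ≤ k ∧ τ ≤ C k})
    -- V(τ) = (C_{L(τ)} - τ) / π_{σ(L(τ))}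
    (V : ℝ → ℝ) (hV : ∀ τ ∈ Set.Ioc (0 : ℝ) 1, V τ = (C (L τ) - τ) / πord (L τ))
    -- S(u, τ) = {σ(1),...,σ(L(τ)-1)} if u ≤ V(τ), and {σ(1),...,σ(L(τ))} otherwise
    (S : ℝ → ℝ → Set (Fin K))
    (hS : ∀ u τ, S u τ =
      {y | (σ.symm y : ℕ) + 1 ≤ (if u ≤ V τ then L τ - 1 else L τ)}) :
    ∀ u ∈ Set.Icc (0 : ℝ) 1, ∀ τ ∈ Set.Ioc (0 : ℝ) 1, ∀ τ' ∈ Set.Ioc (0 : ℝ) 1,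
      τ ≤ τ' → S u τ ⊆ S u τ' := by
  intro u hu τ hτ τ' hτ' hττ'
  have hCK : C K = 1 := by
    rw [hC, ← hπ1]
    rw [Finset.filter_true_of_mem (fun j _ => j.isLt)]
    exact Equiv.sum_comp σ π
  have memK : ∀ t ∈ Set.Ioc (0:ℝ) 1, K ∈ {k : ℕ | 1 ≤ k ∧ t ≤ C k} := by
    intro t ht; exact ⟨hK, hCK ▸ ht.2⟩
  have hLmem : ∀ t ∈ Set.Ioc (0:ℝ) 1, L t ∈ {k : ℕ | 1 ≤ k ∧ t ≤ C k} := by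
    intro t ht; rw [hL t ht]; exact Nat.sInf_mem ⟨K, memK t ht⟩
  have hLK : ∀ t ∈ Set.Ioc (0:ℝ) 1, L t ≤ K := by
    intro t ht; rw [hL t ht]; exact Nat.sInf_le (memK t ht)
  have hL1 : ∀ t ∈ Set.Ioc (0:ℝ) 1, 1 ≤ L t := fun t ht => (hLmem t ht).1
  have hLmono : L τ ≤ L τ' := by
    rw [hL τ hτ]
    exact Nat.sInf_le ⟨(hLmem τ' hτ').1, hττ'.trans (hLmem τ' hτ').2⟩
  -- key: threshold monotonicity
  have key : (if u ≤ V τ then L τ - 1 else L τ) ≤ (if u ≤ V τ' then L τ' - 1 else L τ') := by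
    rcases lt_or_eq_of_le hLmono with hlt | heq
    · have h1 : (if u ≤ V τ then L τ - 1 else L τ) ≤ L τ := by
        split <;> omega
      have h2 : L τ' - 1 ≤ (if u ≤ V τ' then L τ' - 1 else L τ') := by
        split <;> omega
      exact h1.trans ((by omega : L τ ≤ L τ' - 1).trans h2)
    · -- L τ = L τ'
      by_cases h' : u ≤ V τ'
      · simp only [h', if_true]
        by_cases h : u ≤ V τ
        · simp only [h, if_true]; omega
        · exfalso
          apply h
          refine h'.trans ?_
          rw [hV τ hτ, hV τ' hτ', ← heq]
          have hp : 0 ≤ πord (L τ) := by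
            have hlt : L τ - 1 < K := by
              have := hLK τ hτ; have := hL1 τ hτ; omega
            have := hπord ⟨L τ - 1, hlt⟩
            simp only at this
            have h1 := hL1 τ hτ
            rw [show (L τ - 1) + 1 = L τ by omega] at this
            rw [this]
            exact hπ0 _
          exact div_le_div_of_nonneg_right (by linarith) hp
      · simp only [h', if_false, ← heq]
        split <;> omega
  intro y hy
  rw [hS] at hy ⊢
  exact le_trans hy key
end

section
/- Second part of Proposition 1 (uniform scores are equivalent to exact coverage at all levels): let \hat\pi be a (possibly different) probability vector on \{1,\dots,K\} with associated sorting \hat\sigma, prediction sets \hat S(u,\tau), and conformity scores \hat W(y,u) defined from \hat\pi by the same formulas. If Y is a random label with P[Y = y] = \pi_y and U is uniform on [0,1] independent of Y, then \hat W(Y,U) is uniformly distributed on [0,1] (i.e., P[\hat W(Y,U) \le \beta] = \beta for all \beta \in [0,1]) if and only if for every \alpha \in (0,1), P[Y \in \hat S(U, 1-\alpha)] = 1-\alpha. -/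
open MeasureTheory ProbabilityTheory

/-- Proposition 1 (second part): the conformity scores `Ŵ(Y,U)` computed from a model `π̂`
are uniformly distributed if and only if the prediction sets `Ŝ(U, 1-α)` have exact
coverage `1-α` at every level `α ∈ (0,1)`. -/
theorem uniform_scores_iff_exact_coverage
    -- the true probability vector π on {1,...,K} (the distribution of Y)
    (K : ℕ) (hK : 1 ≤ K)
    (π : Fin K → ℝ) (hπ0 : ∀ y, 0 ≤ π y) (hπ1 : ∑ y, π y = 1)
    -- a (possibly different) probability vector π̂
    (πh : Fin K → ℝ) (hπh0 : ∀ y, 0 ≤ πh y) (hπh1 : ∑ y, πh y = 1)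
    -- a permutation sorting π̂ in nonincreasing order
    (σh : Equiv.Perm (Fin K))
    (hσh : ∀ i j : Fin K, i ≤ j → πh (σh j) ≤ πh (σh i))
    -- the cumulative sums Ĉ_k = π̂_{σ̂(1)} + ... + π̂_{σ̂(k)} (Ĉ_0 = 0)
    (Ch : ℕ → ℝ)
    (hCh : ∀ k : ℕ, Ch k = ∑ j ∈ Finset.univ.filter (fun j : Fin K => (j : ℕ) < k), πh (σh j))
    -- π̂ord k = π̂_{σ̂(k)} for 1 ≤ k ≤ K (1-indexed sorted probabilities)
    (πhord : ℕ → ℝ) (hπhord : ∀ k : Fin K, πhord ((k : ℕ) + 1) = πh (σh k))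
    -- L̂(τ) = min {k ≥ 1 : Ĉ_k ≥ τ}
    (Lh : ℝ → ℕ) (hLh : ∀ τ ∈ Set.Ioc (0 : ℝ) 1, Lh τ = sInf {k : ℕ | 1 ≤ k ∧ τ ≤ Ch k})
    -- V̂(τ) = (Ĉ_{L̂(τ)} - τ) / π̂_{σ̂(L̂(τ))}
    (Vh : ℝ → ℝ) (hVh : ∀ τ ∈ Set.Ioc (0 : ℝ) 1, Vh τ = (Ch (Lh τ) - τ) / πhord (Lh τ))
    -- Ŝ(u, τ) = {σ̂(1),...,σ̂(L̂(τ)-1)} if u ≤ V̂(τ), and {σ̂(1),...,σ̂(L̂(τ))} otherwise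
    (Sh : ℝ → ℝ → Set (Fin K))
    (hSh : ∀ u τ, Sh u τ =
      {y | (σh.symm y : ℕ) + 1 ≤ (if u ≤ Vh τ then Lh τ - 1 else Lh τ)})
    -- the conformity score Ŵ(y, u) = Ĉ_{r̂(y)} - u * π̂_{σ̂(r̂(y))}, where r̂(y) = σ̂⁻¹(y)
    (Wh : Fin K → ℝ → ℝ)
    (hWh : ∀ y u, Wh y u = Ch ((σh.symm y : ℕ) + 1) - u * πh y)
    -- the random label Y with P[Y = y] = π y and the independent uniform noise U
    (Ω : Type*) [MeasurableSpace Ω] (P : Measure Ω) [IsProbabilityMeasure P]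
    (Y : Ω → Fin K) (U : Ω → ℝ) (hY : Measurable Y) (hU : Measurable U)
    (hYdist : ∀ y, P {ω | Y ω = y} = ENNReal.ofReal (π y))
    (hUdist : P.map U = volume.restrict (Set.Icc (0 : ℝ) 1))
    (hindep : IndepFun Y U P) :
    -- Ŵ(Y,U) is uniform on [0,1] iff Ŝ(U, 1-α) has exact coverage 1-α for all α ∈ (0,1)
    (∀ β ∈ Set.Icc (0 : ℝ) 1, P {ω | Wh (Y ω) (U ω) ≤ β} = ENNReal.ofReal β) ↔
    (∀ α ∈ Set.Ioo (0 : ℝ) 1,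
      P {ω | Y ω ∈ Sh (U ω) (1 - α)} = ENNReal.ofReal (1 - α)) := by

  -- basic facts about the cumulative sums
  have hCh0 : Ch 0 = 0 := by rw [hCh]; simp
  have hstep : ∀ m : Fin K, Ch ((m : ℕ) + 1) = Ch (m : ℕ) + πh (σh m) := by
    intro m
    rw [hCh, hCh]
    have hins : (Finset.univ.filter (fun j : Fin K => (j : ℕ) < (m : ℕ) + 1))
        = insert m (Finset.univ.filter (fun j : Fin K => (j : ℕ) < (m : ℕ))) := by
      ext j
      simp only [Finset.mem_filter, Finset.mem_univ, true_and, Finset.mem_insert, Fin.ext_iff]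
      omega
    rw [hins, Finset.sum_insert (by simp)]
    ring
  have hmono : Monotone Ch := by
    intro a b hab
    rw [hCh, hCh]
    apply Finset.sum_le_sum_of_subset_of_nonneg
    · intro j hj
      simp only [Finset.mem_filter, Finset.mem_univ, true_and] at hj ⊢
      omega
    · intro j _ _
      exact hπh0 _
  have hChK : Ch K = 1 := by
    rw [hCh]
    have huniv : (Finset.univ.filter (fun j : Fin K => (j : ℕ) < K)) = Finset.univ := by
      ext j; simp [j.isLt]
    rw [huniv, ← hπh1]
    exact Equiv.sum_comp σh πh
  -- the key pointwise equivalence : y ∈ Ŝ(u,τ) ↔ Ŵ(y,u) < τ, for u ∈ [0,1], τ ∈ (0,1]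
  have hkey : ∀ τ ∈ Set.Ioc (0:ℝ) 1, ∀ u ∈ Set.Icc (0:ℝ) 1, ∀ y : Fin K,
      (y ∈ Sh u τ ↔ Wh y u < τ) := by
    intro τ hτ u hu y
    obtain ⟨hτ0, hτ1⟩ := hτ
    obtain ⟨hu0, hu1⟩ := hu
    have hKmem : K ∈ {k : ℕ | 1 ≤ k ∧ τ ≤ Ch k} := ⟨hK, by rw [hChK]; exact hτ1⟩
    have hLdef := hLh τ ⟨hτ0, hτ1⟩
    have hLmem : Lh τ ∈ {k : ℕ | 1 ≤ k ∧ τ ≤ Ch k} := by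
      rw [hLdef]; exact Nat.sInf_mem ⟨K, hKmem⟩
    have hL1 : 1 ≤ Lh τ := hLmem.1
    have hCL : τ ≤ Ch (Lh τ) := hLmem.2
    have hLK : Lh τ ≤ K := by rw [hLdef]; exact Nat.sInf_le hKmem
    have hCm : ∀ m, m < Lh τ → Ch m < τ := by
      intro m hm
      rcases Nat.eq_zero_or_pos m with h0 | h1
      · rw [h0, hCh0]; exact hτ0
      · have hnm : m ∉ {k : ℕ | 1 ≤ k ∧ τ ≤ Ch k} := by
          rw [hLdef] at hm; exact Nat.notMem_of_lt_sInf hm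
        simp only [Set.mem_setOf_eq, not_and, not_le] at hnm
        exact hnm h1
    have hL1K : Lh τ - 1 < K := by omega
    set m0 : Fin K := ⟨Lh τ - 1, hL1K⟩ with hm0def
    have hm0 : (m0 : ℕ) + 1 = Lh τ := by simp only [hm0def]; omega
    have hstepL : Ch (Lh τ) = Ch (Lh τ - 1) + πh (σh m0) := by
      have h := hstep m0
      rw [hm0] at h
      simpa only [hm0def] using h
    have hpL : 0 < πh (σh m0) := by
      have h1 := hCm (Lh τ - 1) (by omega)
      linarith
    have hVval : Vh τ = (Ch (Lh τ) - τ) / πh (σh m0) := by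
      rw [hVh τ ⟨hτ0, hτ1⟩]
      have h := hπhord m0
      rw [hm0] at h
      rw [h]
    rw [hSh, hWh]
    simp only [Set.mem_setOf_eq]
    have hy : σh (σh.symm y) = y := Equiv.apply_symm_apply σh y
    have hstepr : Ch ((σh.symm y : ℕ) + 1) = Ch ((σh.symm y : ℕ)) + πh y := by
      have h := hstep (σh.symm y)
      rwa [hy] at h
    rcases lt_trichotomy ((σh.symm y : ℕ) + 1) (Lh τ) with hlt | heq | hgt
    · refine iff_of_true ?_ ?_
      · split_ifs <;> omega
      · have h1 := hCm _ hlt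
        have hnn : 0 ≤ u * πh y := mul_nonneg hu0 (hπh0 y)
        linarith
    · have hym0 : σh.symm y = m0 := by
        apply Fin.ext
        simp only [hm0def]
        omega
      have hpy : πh y = πh (σh m0) := by rw [← hym0, hy]
      rw [heq, hpy]
      by_cases hc : u ≤ Vh τ
      · rw [if_pos hc]
        refine iff_of_false (by omega) ?_
        rw [hVval] at hc
        have h1 : u * πh (σh m0) ≤ Ch (Lh τ) - τ := (le_div_iff₀ hpL).mp hc
        linarith
      · rw [if_neg hc]
        refine iff_of_true le_rfl ?_
        push_neg at hc
        rw [hVval] at hc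
        have h1 : Ch (Lh τ) - τ < u * πh (σh m0) := (div_lt_iff₀ hpL).mp hc
        linarith
    · refine iff_of_false (by split_ifs <;> omega) ?_
      have h1 : Ch (Lh τ) ≤ Ch ((σh.symm y : ℕ)) := hmono (by omega)
      have h2 : u * πh y ≤ πh y := mul_le_of_le_one_left (hπh0 y) hu1
      exact not_lt.mpr (by linarith)
  -- U lands in [0,1] almost surely
  have hae : ∀ᵐ ω ∂P, U ω ∈ Set.Icc (0:ℝ) 1 := by
    rw [ae_iff]
    have hset : {ω | ¬ U ω ∈ Set.Icc (0:ℝ) 1} = U ⁻¹' (Set.Icc (0:ℝ) 1)ᶜ := rfl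
    rw [hset, ← Measure.map_apply hU measurableSet_Icc.compl, hUdist,
      Measure.restrict_apply measurableSet_Icc.compl]
    simp
  -- equality of the coverage event and the strict-score event in measure
  have hAB : ∀ τ ∈ Set.Ioc (0:ℝ) 1,
      P {ω | Y ω ∈ Sh (U ω) τ} = P {ω | Wh (Y ω) (U ω) < τ} := by
    intro τ hτ
    apply measure_congr
    rw [Filter.eventuallyEq_set]
    filter_upwards [hae] with ω hω
    simpa using hkey τ hτ (U ω) hω (Y ω)
  constructor
  · -- uniform scores → exact coverage
    intro h α hα
    have hτ : (1 - α) ∈ Set.Ioc (0:ℝ) 1 := ⟨by linarith [hα.2], by linarith [hα.1]⟩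
    rw [hAB _ hτ]
    apply le_antisymm
    · calc P {ω | Wh (Y ω) (U ω) < 1 - α}
          ≤ P {ω | Wh (Y ω) (U ω) ≤ 1 - α} := by
            refine measure_mono fun ω hω => ?_
            simp only [Set.mem_setOf_eq] at hω ⊢
            exact le_of_lt hω
        _ = ENNReal.ofReal (1 - α) := h _ ⟨le_of_lt hτ.1, hτ.2⟩
    · have htd : Filter.Tendsto (fun n : ℕ => max 0 ((1 - α) - 1 / ((n:ℝ) + 1)))
          Filter.atTop (nhds (1 - α)) := by
        have h1 : Filter.Tendsto (fun n : ℕ => (1 - α) - 1 / ((n:ℝ) + 1))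
            Filter.atTop (nhds ((1 - α) - 0)) :=
          tendsto_const_nhds.sub tendsto_one_div_add_atTop_nhds_zero_nat
        rw [sub_zero] at h1
        have h2 : Filter.Tendsto (fun n : ℕ => max (0:ℝ) ((1 - α) - 1 / ((n:ℝ) + 1)))
            Filter.atTop (nhds (max 0 (1 - α))) := Filter.Tendsto.max tendsto_const_nhds h1
        rwa [max_eq_right (le_of_lt hτ.1)] at h2
      refine le_of_tendsto' (ENNReal.tendsto_ofReal htd) fun n => ?_
      have hβmem : max 0 ((1 - α) - 1 / ((n:ℝ) + 1)) ∈ Set.Icc (0:ℝ) 1 := by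
        constructor
        · exact le_max_left _ _
        · apply max_le (by norm_num)
          have h1 : (0:ℝ) < 1 / ((n:ℝ) + 1) := by positivity
          linarith [hτ.2]
      rw [← h _ hβmem]
      refine measure_mono fun ω hω => ?_
      simp only [Set.mem_setOf_eq] at hω ⊢
      have hβlt : max 0 ((1 - α) - 1 / ((n:ℝ) + 1)) < 1 - α := by
        apply max_lt hτ.1
        have h1 : (0:ℝ) < 1 / ((n:ℝ) + 1) := by positivity
        linarith
      exact lt_of_le_of_lt hω hβlt
  · -- exact coverage → uniform scores
    intro h β hβ
    have hB : ∀ τ : ℝ, 0 < τ → τ < 1 →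
        P {ω | Wh (Y ω) (U ω) < τ} = ENNReal.ofReal τ := by
      intro τ h0 h1
      have h' := h (1 - τ) ⟨by linarith, by linarith⟩
      rw [show (1:ℝ) - (1 - τ) = τ by ring] at h'
      rw [← hAB τ ⟨h0, le_of_lt h1⟩]
      exact h'
    have h2 : Filter.Tendsto (fun n : ℕ => ((n:ℝ) + 2)) Filter.atTop Filter.atTop :=
      Filter.tendsto_atTop_add_const_right _ 2 tendsto_natCast_atTop_atTop
    apply le_antisymm
    · rcases eq_or_lt_of_le hβ.2 with h1 | h1
      · rw [h1, ENNReal.ofReal_one]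
        exact prob_le_one
      · have h0 : Filter.Tendsto (fun n : ℕ => (1 - β) / ((n:ℝ) + 2))
            Filter.atTop (nhds 0) := Filter.Tendsto.div_atTop tendsto_const_nhds h2
        have htd : Filter.Tendsto (fun n : ℕ => β + (1 - β) / ((n:ℝ) + 2))
            Filter.atTop (nhds β) := by
          have h3 : Filter.Tendsto (fun n : ℕ => β + (1 - β) / ((n:ℝ) + 2))
              Filter.atTop (nhds (β + 0)) := Filter.Tendsto.add tendsto_const_nhds h0
          rwa [add_zero] at h3
        refine ge_of_tendsto' (ENNReal.tendsto_ofReal htd) fun n => ?_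
        have hpos : (0:ℝ) < (1 - β) / ((n:ℝ) + 2) := by
          apply div_pos (by linarith)
          positivity
        have hlt1 : β + (1 - β) / ((n:ℝ) + 2) < 1 := by
          have h4 : (1 - β) / ((n:ℝ) + 2) < 1 - β := by
            apply div_lt_self (by linarith)
            have : (0:ℝ) ≤ (n:ℝ) := Nat.cast_nonneg n
            linarith
          linarith
        rw [← hB _ (by linarith [hβ.1]) hlt1]
        refine measure_mono fun ω hω => ?_
        simp only [Set.mem_setOf_eq] at hω ⊢
        linarith
    · rcases eq_or_lt_of_le hβ.1 with h0 | h0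
      · rw [← h0]; simp
      · have h0' : Filter.Tendsto (fun n : ℕ => β / ((n:ℝ) + 2))
            Filter.atTop (nhds 0) := Filter.Tendsto.div_atTop tendsto_const_nhds h2
        have htd : Filter.Tendsto (fun n : ℕ => β - β / ((n:ℝ) + 2))
            Filter.atTop (nhds β) := by
          have h3 : Filter.Tendsto (fun n : ℕ => β - β / ((n:ℝ) + 2))
              Filter.atTop (nhds (β - 0)) := Filter.Tendsto.sub tendsto_const_nhds h0'
          rwa [sub_zero] at h3
        refine le_of_tendsto' (ENNReal.tendsto_ofReal htd) fun n => ?_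
        have hdl : β / ((n:ℝ) + 2) < β := by
          apply div_lt_self h0
          have : (0:ℝ) ≤ (n:ℝ) := Nat.cast_nonneg n
          linarith
        have hτ0 : (0:ℝ) < β - β / ((n:ℝ) + 2) := by linarith
        have hτ1 : β - β / ((n:ℝ) + 2) < 1 := by
          have : (0:ℝ) < β / ((n:ℝ) + 2) := by positivity
          linarith [hβ.2]
        rw [← hB _ hτ0 hτ1]
        refine measure_mono fun ω hω => ?_
        simp only [Set.mem_setOf_eq] at hω ⊢
        have hx : (0:ℝ) < β / ((n:ℝ) + 2) := by positivity
        linarith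
end

section
/- Split-conformal calibration guarantee (marginal coverage of the calibrated threshold): let W_1,\dots,W_m,W_{m+1} be i.i.d. (hence exchangeable) real-valued random variables, let \alpha \in (0,1) satisfy \lceil (1-\alpha)(m+1) \rceil \le m, and let \hat\tau be the \lceil (1-\alpha)(m+1) \rceil-th smallest value among W_1,\dots,W_m. Then P[W_{m+1} \le \hat\tau] \ge 1-\alpha. -/
open MeasureTheory ProbabilityTheory
open scoped ENNReal

/-- If a sorted list has fewer than `k` entries below `t`, then its `(k-1)`-th entry is `≥ t`. -/
lemma aux_sorted_getD {l : List ℝ} (hs : l.Pairwise (· ≤ ·)) {k : ℕ}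
    (hk1 : 1 ≤ k) (hk : k ≤ l.length) {t : ℝ}
    (hc : l.countP (fun x => decide (x < t)) < k) :
    t ≤ l.getD (k - 1) 0 := by
  have hlt : k - 1 < l.length := by omega
  rw [List.getD_eq_getElem l 0 hlt]
  by_contra h
  push_neg at h
  have hall : ∀ a ∈ l.take k, (fun x => decide (x < t)) a = true := by
    intro a ha
    rw [List.mem_take_iff_getElem] at ha
    obtain ⟨i, hi, rfl⟩ := ha
    have hik : i < k := lt_of_lt_of_le hi (min_le_left _ _)
    have hil : i < l.length := lt_of_lt_of_le hi (min_le_right _ _)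
    simp only [decide_eq_true_eq]
    have : l[i] ≤ l[k-1] := by
      have := hs.rel_get_of_le (a := ⟨i, by omega⟩) (b := ⟨k-1, hlt⟩)
        (by simp [Fin.le_def]; omega)
      simpa using this
    exact lt_of_le_of_lt this h
  have h1 : (l.take k).countP (fun x => decide (x < t)) = (l.take k).length :=
    List.countP_eq_length.mpr hall
  have h2 : (l.take k).countP (fun x => decide (x < t)) ≤ l.countP (fun x => decide (x < t)) :=
    (List.take_sublist k l).countP_le
  rw [List.length_take] at h1
  omega

/-- reindexing a filtered count by a permutation -/
lemma aux_card_filter_perm {n : ℕ} (σ : Equiv.Perm (Fin n)) (p : Fin n → Prop)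
    [DecidablePred p] :
    (Finset.univ.filter fun i => p (σ i)).card = (Finset.univ.filter p).card := by
  apply Finset.card_bij (fun i _ => σ i)
  · intro a ha; simp only [Finset.mem_filter, Finset.mem_univ, true_and] at ha ⊢; exact ha
  · intro a _ b _ h; exact σ.injective h
  · intro b hb
    refine ⟨σ.symm b, ?_, by simp⟩
    simp only [Finset.mem_filter, Finset.mem_univ, true_and] at hb ⊢
    simpa using hb

/-- at least `k` indices have strict rank `< k` -/
lemma aux_card_rank {n : ℕ} (w : Fin n → ℝ) {k : ℕ} (hk : k ≤ n) :
    k ≤ (Finset.univ.filter fun j =>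
      (Finset.univ.filter fun i => w i < w j).card < k).card := by
  classical
  set σ := Tuple.sort w with hσ
  have hmono : Monotone (w ∘ σ) := Tuple.monotone_sort w
  have hsub : (Finset.univ.filter fun i : Fin n => (i : ℕ) < k).image σ ⊆
      Finset.univ.filter fun j => (Finset.univ.filter fun i => w i < w j).card < k := by
    intro j hj
    simp only [Finset.mem_image, Finset.mem_filter, Finset.mem_univ, true_and] at hj ⊢
    obtain ⟨i, hi, rfl⟩ := hj
    have h1 : (Finset.univ.filter fun i' => w i' < w (σ i)).card
        = (Finset.univ.filter fun i' => w (σ i') < w (σ i)).card :=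
      (aux_card_filter_perm σ (fun i' => w i' < w (σ i))).symm
    rw [h1]
    have h2 : (Finset.univ.filter fun i' => w (σ i') < w (σ i)) ⊆
        Finset.univ.filter fun i' : Fin n => (i' : ℕ) < (i : ℕ) := by
      intro i' hi'
      simp only [Finset.mem_filter, Finset.mem_univ, true_and] at hi' ⊢
      by_contra hge
      push_neg at hge
      exact absurd (hmono (show i ≤ i' from hge)) (not_le.mpr hi')
    have h3 : (Finset.univ.filter fun i' : Fin n => (i' : ℕ) < (i : ℕ)).card = i := by
      have : (Finset.univ.filter fun i' : Fin n => (i' : ℕ) < (i : ℕ)) = Finset.Iio i := by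
        ext j; simp only [Finset.mem_filter, Finset.mem_univ, true_and, Finset.mem_Iio, Fin.lt_def]
      rw [this, Fin.card_Iio]
    calc (Finset.univ.filter fun i' => w (σ i') < w (σ i)).card
        ≤ (Finset.univ.filter fun i' : Fin n => (i' : ℕ) < (i : ℕ)).card :=
          Finset.card_le_card h2
      _ = i := h3
      _ < k := hi
  have hcard : ((Finset.univ.filter fun i : Fin n => (i : ℕ) < k).image σ).card = k := by
    rw [Finset.card_image_of_injective _ σ.injective]
    conv_rhs => rw [show k = (Finset.univ : Finset (Fin k)).card by simp]
    refine Finset.card_bij' (fun (j : Fin n) (hj : j ∈ _) => (⟨j.1, by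
        simpa using hj⟩ : Fin k))
      (fun (j : Fin k) (_ : j ∈ _) => (⟨j.1, lt_of_lt_of_le j.2 hk⟩ : Fin n)) ?_ ?_ ?_ ?_
    · intro a ha; exact Finset.mem_univ _
    · intro a ha
      simp only [Finset.mem_filter, Finset.mem_univ, true_and]
      exact a.2
    · intro a ha; rfl
    · intro a ha; rfl
  calc k = _ := hcard.symm
    _ ≤ _ := Finset.card_le_card hsub

/-- the joint law of an independent family is the product of the marginal laws -/
lemma aux_map_pi {n : ℕ} {Ω : Type*} [MeasurableSpace Ω] (P : Measure Ω)
    [IsProbabilityMeasure P]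
    (W : Fin n → Ω → ℝ) (hWm : ∀ i, Measurable (W i))
    (hindep : iIndepFun W P) :
    P.map (fun ω i => W i ω) = Measure.pi (fun i => P.map (W i)) := by
  haveI : ∀ i, IsProbabilityMeasure (P.map (W i)) := fun i =>
    Measure.isProbabilityMeasure_map (hWm i).aemeasurable
  refine (Measure.pi_eq fun s hs => ?_).symm
  rw [Measure.map_apply (measurable_pi_lambda _ hWm) (MeasurableSet.univ_pi hs)]
  have hpre : (fun ω i => W i ω) ⁻¹' Set.pi Set.univ s = ⋂ i, W i ⁻¹' s i := by
    ext ω; simp [Set.mem_pi]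
  rw [hpre]
  have h := hindep.measure_inter_preimage_eq_mul Finset.univ (sets := s) (fun i _ => hs i)
  simp only [Set.biInter_univ, Finset.mem_univ, Set.iInter_true] at h
  rw [h]
  exact Finset.prod_congr rfl fun i _ => (Measure.map_apply (hWm i) (hs i)).symm

/-- Split-conformal calibration guarantee (marginal coverage): if
`W_1, …, W_m, W_{m+1}` are i.i.d. real random variables, `α ∈ (0,1)` is such that
`k = ⌈(1-α)(m+1)⌉ ≤ m`, and `τ̂` is the `k`-th smallest value among `W_1, …, W_m`,
then `P[W_{m+1} ≤ τ̂] ≥ 1 - α`. -/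
theorem split_conformal_marginal_coverage
    (m : ℕ) (hm : 1 ≤ m)
    (Ω : Type*) [MeasurableSpace Ω] (P : Measure Ω) [IsProbabilityMeasure P]
    -- the i.i.d. scores: W i.castSucc (i : Fin m) are the calibration scores and
    -- W (Fin.last m) is the test score
    (W : Fin (m + 1) → Ω → ℝ) (hWm : ∀ i, Measurable (W i))
    (hindep : iIndepFun W P)
    (hident : ∀ i j, P.map (W i) = P.map (W j))
    -- the level α and the calibration rank k = ⌈(1-α)(m+1)⌉ ≤ m
    (α : ℝ) (hα : α ∈ Set.Ioo (0 : ℝ) 1)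
    (k : ℕ) (hk : k = ⌈(1 - α) * ((m : ℝ) + 1)⌉₊) (hkm : k ≤ m)
    -- τ̂ is the k-th smallest calibration score
    (τhat : Ω → ℝ)
    (hτhat : ∀ ω, τhat ω =
      ((Finset.univ.val.map (fun i : Fin m => W i.castSucc ω)).sort (· ≤ ·)).getD (k - 1) 0) :
    ENNReal.ofReal (1 - α) ≤ P {ω | W (Fin.last m) ω ≤ τhat ω} := by
  classical
  obtain ⟨hα0, hα1⟩ := hα
  have hk1 : 1 ≤ k := by
    rw [hk]
    exact Nat.one_le_iff_ne_zero.mpr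
      (Nat.ceil_pos.mpr (mul_pos (by linarith) (by positivity))).ne'
  set X : Ω → (Fin (m + 1) → ℝ) := fun ω i => W i ω with hX
  have hXmeas : Measurable X := measurable_pi_lambda _ hWm
  set F : Fin (m + 1) → (Fin (m + 1) → ℝ) → ℕ :=
    fun j v => (Finset.univ.filter fun i => v i < v j).card with hF
  have hFmeas : ∀ j, Measurable (F j) := by
    intro j
    have hrw : F j = fun v => ∑ i, if v i < v j then 1 else 0 := by
      funext v; exact Finset.card_filter _ _
    rw [hrw]
    exact Finset.measurable_sum _ fun i _ =>
      Measurable.ite (measurableSet_lt (measurable_pi_apply i) (measurable_pi_apply j))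
        measurable_const measurable_const
  set A : Fin (m + 1) → Set (Fin (m + 1) → ℝ) := fun j => {v | F j v < k} with hA
  have hAmeas : ∀ j, MeasurableSet (A j) := fun j => (hFmeas j) measurableSet_Iio
  set ν : Measure ℝ := P.map (W (Fin.last m)) with hν
  haveI : IsProbabilityMeasure ν := Measure.isProbabilityMeasure_map (hWm _).aemeasurable
  have hlaw : P.map X = Measure.pi (fun _ => ν) := by
    rw [aux_map_pi P W hWm hindep]
    congr 1
    funext i
    exact hident i (Fin.last m)
  -- exchangeability step
  have hEj : ∀ j, P (X ⁻¹' A j) = P (X ⁻¹' A (Fin.last m)) := by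
    intro j
    set π : Equiv.Perm (Fin (m + 1)) := Equiv.swap j (Fin.last m) with hπ
    set e := MeasurableEquiv.piCongrLeft (fun _ : Fin (m + 1) => ℝ) π with he
    have hecoe : ∀ (v : Fin (m + 1) → ℝ) i, e v i = v (π i) := by
      intro v i
      have hco : (⇑e : (Fin (m + 1) → ℝ) → (Fin (m + 1) → ℝ))
          = ⇑(Equiv.piCongrLeft (fun _ => ℝ) π) := MeasurableEquiv.coe_piCongrLeft π
      rw [hco]
      conv_lhs => rw [show i = π (π.symm i) from (Equiv.apply_symm_apply π i).symm]
      rw [Equiv.piCongrLeft_apply_apply]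
      rw [hπ, Equiv.symm_swap]
    have hApre : A j = e ⁻¹' A (Fin.last m) := by
      ext v
      simp only [Set.mem_preimage, hA, Set.mem_setOf_eq]
      have hl : e v (Fin.last m) = v j := by
        rw [hecoe]; rw [hπ, Equiv.swap_apply_right]
      have h2 : F (Fin.last m) (e v) = F j v := by
        simp only [hF]
        calc (Finset.univ.filter fun i => e v i < e v (Fin.last m)).card
            = (Finset.univ.filter fun i => v (π i) < v j).card := by
              congr 1
              apply Finset.filter_congr
              intro i _
              rw [hecoe v i, hl]
          _ = (Finset.univ.filter fun i => v i < v j).card :=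
              aux_card_filter_perm π (fun i => v i < v j)
      rw [h2]
    calc P (X ⁻¹' A j) = (P.map X) (A j) := (Measure.map_apply hXmeas (hAmeas j)).symm
      _ = (P.map X) (e ⁻¹' A (Fin.last m)) := by rw [hApre]
      _ = ((P.map X).map e) (A (Fin.last m)) :=
          (Measure.map_apply e.measurable (hAmeas _)).symm
      _ = (P.map X) (A (Fin.last m)) := by
          rw [hlaw, (measurePreserving_piCongrLeft (fun _ => ν) π).map_eq]
      _ = P (X ⁻¹' A (Fin.last m)) := Measure.map_apply hXmeas (hAmeas _)
  -- counting bound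
  have hpoint : ∀ ω, (k : ℝ≥0∞) ≤ ∑ j, (X ⁻¹' A j).indicator (1 : Ω → ℝ≥0∞) ω := by
    intro ω
    have hcount := aux_card_rank (X ω) (k := k) (le_trans hkm (Nat.le_succ m))
    have heq : ∀ j, (X ⁻¹' A j).indicator (1 : Ω → ℝ≥0∞) ω
        = if F j (X ω) < k then 1 else 0 := by
      intro j
      simp [Set.indicator_apply, Set.mem_preimage, hA, Set.mem_setOf_eq]
    calc (k : ℝ≥0∞) ≤ ((Finset.univ.filter fun j => F j (X ω) < k).card : ℝ≥0∞) := by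
          exact_mod_cast hcount
      _ = ∑ j, (X ⁻¹' A j).indicator (1 : Ω → ℝ≥0∞) ω := by
          simp_rw [heq]
          rw [Finset.sum_boole]
  have hsum : (k : ℝ≥0∞) ≤ ((m + 1 : ℕ) : ℝ≥0∞) * P (X ⁻¹' A (Fin.last m)) := by
    calc (k : ℝ≥0∞) = ∫⁻ _, (k : ℝ≥0∞) ∂P := by simp
      _ ≤ ∫⁻ ω, ∑ j, (X ⁻¹' A j).indicator (1 : Ω → ℝ≥0∞) ω ∂P := lintegral_mono hpoint
      _ = ∑ j, ∫⁻ ω, (X ⁻¹' A j).indicator (1 : Ω → ℝ≥0∞) ω ∂P :=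
          lintegral_finset_sum _ fun j _ => measurable_one.indicator (hXmeas (hAmeas j))
      _ = ∑ j : Fin (m + 1), P (X ⁻¹' A j) :=
          Finset.sum_congr rfl fun j _ => lintegral_indicator_one (hXmeas (hAmeas j))
      _ = ∑ _j : Fin (m + 1), P (X ⁻¹' A (Fin.last m)) :=
          Finset.sum_congr rfl fun j _ => hEj j
      _ = ((m + 1 : ℕ) : ℝ≥0∞) * P (X ⁻¹' A (Fin.last m)) := by
          rw [Finset.sum_const, Finset.card_univ, Fintype.card_fin, nsmul_eq_mul]
  -- from the sum bound to the probability bound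
  have hprob : ENNReal.ofReal (1 - α) ≤ P (X ⁻¹' A (Fin.last m)) := by
    set p := P (X ⁻¹' A (Fin.last m)) with hp
    have hN0 : ((m + 1 : ℕ) : ℝ≥0∞) ≠ 0 := by simp
    have hNtop : ((m + 1 : ℕ) : ℝ≥0∞) ≠ ⊤ := by simp
    rw [← ENNReal.mul_le_mul_iff_left hN0 hNtop]
    have hcast : ENNReal.ofReal (1 - α) * ((m + 1 : ℕ) : ℝ≥0∞)
        = ENNReal.ofReal ((1 - α) * ((m : ℝ) + 1)) := by
      rw [ENNReal.ofReal_mul (by linarith)]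
      congr 1
      rw [← ENNReal.ofReal_natCast (m + 1)]
      congr 1
      push_cast
      ring
    calc ENNReal.ofReal (1 - α) * ((m + 1 : ℕ) : ℝ≥0∞)
        = ENNReal.ofReal ((1 - α) * ((m : ℝ) + 1)) := hcast
      _ ≤ ENNReal.ofReal (k : ℝ) := ENNReal.ofReal_le_ofReal (hk ▸ Nat.le_ceil _)
      _ = (k : ℝ≥0∞) := ENNReal.ofReal_natCast k
      _ ≤ ((m + 1 : ℕ) : ℝ≥0∞) * p := hsum
      _ = p * ((m + 1 : ℕ) : ℝ≥0∞) := mul_comm _ _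
  -- inclusion of events
  have hincl : X ⁻¹' A (Fin.last m) ⊆ {ω | W (Fin.last m) ω ≤ τhat ω} := by
    intro ω hω
    simp only [Set.mem_preimage, hA, Set.mem_setOf_eq] at hω
    set t : ℝ := W (Fin.last m) ω with ht
    set s : Multiset ℝ := Finset.univ.val.map (fun i : Fin m => W i.castSucc ω) with hs
    have hsorted : (s.sort (· ≤ ·)).Pairwise (· ≤ ·) := Multiset.pairwise_sort _ _
    have hlen : k ≤ (s.sort (· ≤ ·)).length := by
      rw [Multiset.length_sort, hs, Multiset.card_map]
      simpa using hkm
    have hcount : (s.sort (· ≤ ·)).countP (fun x => decide (x < t)) < k := by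
      have e1 : (s.sort (· ≤ ·)).countP (fun x => decide (x < t))
          = Multiset.countP (fun x => x < t) s := by
        rw [← Multiset.coe_countP, Multiset.sort_eq]
      rw [e1, hs, Multiset.countP_map]
      have e2 : Multiset.card (Finset.univ.val.filter fun i : Fin m => W i.castSucc ω < t)
          = (Finset.univ.filter fun i : Fin m => W i.castSucc ω < t).card := rfl
      rw [e2]
      have hsub : (Finset.univ.filter fun i : Fin m => W i.castSucc ω < t).card
          ≤ (Finset.univ.filter fun i : Fin (m + 1) => W i ω < W (Fin.last m) ω).card := by
        apply Finset.card_le_card_of_injOn (fun i => i.castSucc)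
        · intro i hi
          simp only [Finset.mem_coe, Finset.mem_filter, Finset.mem_univ, true_and] at hi ⊢
          exact hi
        · intro a _ b _ hab
          exact Fin.castSucc_injective m hab
      calc (Finset.univ.filter fun i : Fin m => W i.castSucc ω < t).card
          ≤ (Finset.univ.filter fun i : Fin (m + 1) => W i ω < W (Fin.last m) ω).card := hsub
        _ < k := hω
    have := aux_sorted_getD hsorted hk1 hlen hcount
    show W (Fin.last m) ω ≤ τhat ω
    rw [hτhat ω]
    exact this
  exact le_trans hprob (measure_mono hincl)
end
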